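/- Let B_1, ..., B_m be a set of Laurent difference monomials in y_1, ..., y_n whose symbolic support matrix is a normal upper-triangular matrix of rank r over ℚ[x] (i.e., for each i ≤ r the (i,i) entry is nonzero, all entries below and to the left of the diagonal in the first r rows vanish, and the last m−r rows are zero). Then the difference transcendence degree of ℚ⟨B_1, ..., B_m⟩ over ℚ equals r. -/

import Mathlib

/-- A family `a : ι → K` in a difference field `(K, σ)` is transformally independent
over `ℚ` if the family of all transforms `σ^k (a i)` is algebraically independent over `ℚ`. -/
def TransformallyIndependent {K : Type*} [Field K] [Algebra ℚ K]
    (σ : K →+* K) {ι : Type*} (a : ι → K) : Prop :=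
  AlgebraicIndependent ℚ (fun p : ι × ℕ => (σ ^ p.2) (a p.1))

/-- The difference transcendence degree over `ℚ` of the difference field generated by the
finite family `a`: the maximal cardinality of a transformally independent subfamily. -/
noncomputable def dtrdeg {K : Type*} [Field K] [Algebra ℚ K]
    (σ : K →+* K) {m : ℕ} (a : Fin m → K) : ℕ :=
  sSup {k : ℕ | ∃ S : Finset (Fin m), S.card = k ∧
    TransformallyIndependent σ (fun i : {x // x ∈ S} => a i)}

/-!
For `i < r`, every transform `σ^t B_i` is a Laurent monomial in the algebraically independent
elements `σ^k y_j`, and under the identification of exponent vectors with vectors of polynomials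
(the exponent of `σ^k y_j` is the coefficient of `x^k` in entry `j`) its exponent vector is
`x^t • M_i`. The triangular shape makes the rows `M_0, …, M_{r-1}` linearly independent over
`ℚ[x]`, hence the vectors `x^t • M_i` are linearly independent over `ℚ`, and Laurent monomials
with ℤ-independent exponent vectors in algebraically independent elements are algebraically
independent. The rows `i ≥ r` give `B_i = 1`, which lies in no transformally independent family.
-/

section LaurentMonomial

variable {K : Type*} [Field K] {J : Type*}

noncomputable def laurentMonomial (z : J → K) (g : J →₀ ℤ) : K := g.prod fun j a => z j ^ a

variable {z : J → K}

theorem laurentMonomial_zero : laurentMonomial z 0 = 1 := Finsupp.prod_zero_index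

theorem laurentMonomial_add (hz : ∀ j, z j ≠ 0) (g h : J →₀ ℤ) :
    laurentMonomial z (g + h) = laurentMonomial z g * laurentMonomial z h :=
  Finsupp.prod_add_index' (fun _ => zpow_zero _) fun j => zpow_add₀ (hz j)

theorem laurentMonomial_single (j : J) (a : ℤ) :
    laurentMonomial z (Finsupp.single j a) = z j ^ a :=
  Finsupp.prod_single_index (zpow_zero _)

theorem laurentMonomial_sum (hz : ∀ j, z j ≠ 0) {ι : Type*} (s : Finset ι) (g : ι → J →₀ ℤ) :
    laurentMonomial z (∑ i ∈ s, g i) = ∏ i ∈ s, laurentMonomial z (g i) := by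
  classical
  induction s using Finset.induction_on with
  | empty => exact laurentMonomial_zero
  | insert i s hi ih =>
    rw [Finset.sum_insert hi, Finset.prod_insert hi, laurentMonomial_add hz, ih]

theorem laurentMonomial_nsmul (hz : ∀ j, z j ≠ 0) (k : ℕ) (g : J →₀ ℤ) :
    laurentMonomial z (k • g) = laurentMonomial z g ^ k := by
  induction k with
  | zero => rw [zero_smul, pow_zero, laurentMonomial_zero]
  | succ k ih => rw [succ_nsmul, laurentMonomial_add hz, ih, pow_succ]

theorem laurentMonomial_natCast (g : J →₀ ℕ) :
    laurentMonomial z (g.mapRange Nat.cast Nat.cast_zero) = g.prod fun j k => z j ^ k := by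
  rw [laurentMonomial, Finsupp.prod_mapRange_index fun _ => zpow_zero _]
  simp only [zpow_natCast]

theorem laurentMonomial_linearCombination_natCast (hz : ∀ j, z j ≠ 0) {ι : Type*}
    (e : ι → J →₀ ℤ) (c : ι →₀ ℕ) :
    laurentMonomial z (Finsupp.linearCombination ℤ e (c.mapRange Nat.cast Nat.cast_zero)) =
      c.prod fun i k => laurentMonomial z (e i) ^ k := by
  rw [Finsupp.linearCombination_apply, Finsupp.sum_mapRange_index fun i => zero_smul ℤ (e i),
    Finsupp.sum, laurentMonomial_sum hz, Finsupp.prod]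
  simp only [natCast_zsmul, laurentMonomial_nsmul hz]

/-- Shifting by a common exponent `g₀` brings finitely many Laurent monomials to honest monomials,
whose linear independence is the algebraic independence of `z`. -/
theorem AlgebraicIndependent.linearIndependent_laurentMonomial {R : Type*} [CommRing R]
    [Nontrivial R] [Algebra R K] (hz : AlgebraicIndependent R z) :
    LinearIndependent R (laurentMonomial z) := by
  classical
  have hz0 : ∀ j, z j ≠ 0 := hz.ne_zero
  rw [linearIndependent_iff_finset_linearIndependent]
  intro s
  set g₀ : J →₀ ℤ := ∑ g ∈ s, (-g) ⊔ 0
  have hnonneg : ∀ g ∈ s, ∀ j, 0 ≤ (g + g₀) j := by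
    intro g hg j
    have hle : ((-g) ⊔ 0) j ≤ g₀ j :=
      Finset.single_le_sum (f := fun g' => ((-g') ⊔ 0 : J →₀ ℤ)) (fun _ _ => le_sup_right) hg j
    simp only [Finsupp.sup_apply, Finsupp.coe_neg, Pi.neg_apply, Finsupp.coe_zero,
      Pi.zero_apply] at hle
    rw [Finsupp.add_apply]
    omega
  let N : s → J →₀ ℕ := fun g => (g.1 + g₀).mapRange Int.toNat Int.toNat_zero
  have hN : ∀ g : s, (N g).mapRange Nat.cast Nat.cast_zero = g.1 + g₀ := fun g => by
    ext j
    simpa [N] using hnonneg g g.2 j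
  have hNinj : Function.Injective N := fun g h hgh =>
    Subtype.ext (add_right_cancel ((hN g).symm.trans ((congrArg _ hgh).trans (hN h))))
  have hmonomial := ((MvPolynomial.basisMonomials J R).linearIndependent.map'
    (MvPolynomial.aeval z).toLinearMap (LinearMap.ker_eq_bot.mpr hz)).comp N hNinj
  have hshift : LinearMap.mulRight R (laurentMonomial z g₀) ∘ laurentMonomial z ∘ Subtype.val =
      ((MvPolynomial.aeval z).toLinearMap ∘ MvPolynomial.basisMonomials J R) ∘ N := by
    ext g
    simp [← laurentMonomial_add hz0, ← hN, laurentMonomial_natCast, MvPolynomial.aeval_monomial]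
  exact LinearIndependent.of_comp _ (hshift ▸ hmonomial)

theorem AlgebraicIndependent.algebraicIndependent_laurentMonomial {R : Type*} [CommRing R]
    [Nontrivial R] [Algebra R K] (hz : AlgebraicIndependent R z) {ι : Type*} {e : ι → J →₀ ℤ}
    (he : LinearIndependent ℤ e) : AlgebraicIndependent R fun i => laurentMonomial z (e i) := by
  classical
  let F : (ι →₀ ℕ) → J →₀ ℤ := fun c =>
    Finsupp.linearCombination ℤ e (c.mapRange Nat.cast Nat.cast_zero)
  have hF : Function.Injective F :=
    Function.Injective.comp he (Finsupp.mapRange_injective _ _ Nat.cast_injective)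
  have hindep := linearIndependent_iff'.mp (hz.linearIndependent_laurentMonomial.comp F hF)
  rw [algebraicIndependent_iff]
  intro p hp
  have hsum : ∑ c ∈ p.support, p.coeff c • laurentMonomial z (F c) = 0 := by
    rw [← hp]
    conv_rhs => rw [p.as_sum, map_sum]
    refine Finset.sum_congr rfl fun c _ => ?_
    rw [MvPolynomial.aeval_monomial, Algebra.smul_def,
      laurentMonomial_linearCombination_natCast hz.ne_zero]
  rw [← MvPolynomial.support_eq_empty, Finset.eq_empty_iff_forall_notMem]
  exact fun c hc => (MvPolynomial.mem_support_iff.mp hc) (hindep _ _ hsum c hc)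

end LaurentMonomial

theorem linearIndependent_of_pivot {R ι κ : Type*} [Ring R] [NoZeroDivisors R] [LinearOrder ι]
    [WellFoundedLT ι] (v : ι → κ → R) (p : ι → κ) (hpivot : ∀ i, v i (p i) ≠ 0)
    (hbelow : ∀ i i', i < i' → v i' (p i) = 0) : LinearIndependent R v := by
  classical
  rw [linearIndependent_iff']
  intro s c hsum i
  induction i using WellFoundedLT.induction with
  | _ i ih =>
  intro hi
  have hcol := congrFun hsum (p i)
  rw [Finset.sum_apply, Finset.sum_eq_single_of_mem i hi fun i' hi' hne => ?_] at hcol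
  · exact (mul_eq_zero.mp hcol).resolve_right (hpivot i)
  · rcases hne.lt_or_gt with hlt | hgt
    · simp [ih i' hlt hi']
    · simp [hbelow i i' hgt]

section SymbolicSupport

open Polynomial

variable {J : Type*} [Fintype J]

noncomputable def shiftedExponent (a : J → ℕ → ℤ) (s t : ℕ) : (J × ℕ) →₀ ℤ :=
  ∑ j, ∑ k ∈ Finset.range (s + 1), Finsupp.single (j, t + k) (a j k)

theorem pow_apply_prod_eq_laurentMonomial {K : Type*} [Field K] (σ : K →+* K) (y : J → K)
    (hy : ∀ q : J × ℕ, (σ ^ q.2) (y q.1) ≠ 0) (a : J → ℕ → ℤ) (s t : ℕ) :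
    (σ ^ t) (∏ j, ∏ k ∈ Finset.range (s + 1), ((σ ^ k) (y j)) ^ (a j k)) =
      laurentMonomial (fun q : J × ℕ => (σ ^ q.2) (y q.1)) (shiftedExponent a s t) := by
  simp only [shiftedExponent, laurentMonomial_sum hy, laurentMonomial_single, map_prod,
    map_zpow₀, pow_add, RingHom.coe_mul, Function.comp_apply]

variable [DecidableEq J] (R : Type*) [CommRing R]

noncomputable def symbolicSupport : ((J × ℕ) →₀ ℤ) →ₗ[ℤ] (J → R[X]) :=
  Finsupp.linearCombination ℤ fun q => Pi.single q.1 (X ^ q.2)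

theorem symbolicSupport_shiftedExponent (a : J → ℕ → ℤ) (s t : ℕ) :
    symbolicSupport R (shiftedExponent a s t) =
      (X ^ t : R[X]) • fun j => ∑ k ∈ Finset.range (s + 1), C (a j k : R) * X ^ k := by
  ext1 j
  simp only [symbolicSupport, shiftedExponent, map_sum, Finsupp.linearCombination_single,
    pow_add, zsmul_eq_mul, Finset.sum_apply, Pi.mul_apply, Pi.intCast_apply, Pi.single_apply,
    mul_ite, mul_zero, Finset.sum_ite_irrel, Finset.sum_const_zero, Finset.sum_ite_eq,
    Finset.mem_univ, ↓reduceIte, map_intCast, Pi.smul_apply, smul_eq_mul, Finset.mul_sum]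
  exact Finset.sum_congr rfl fun k _ => by ring

theorem eq_zero_of_sum_C_mul_X_pow_eq_zero [CharZero R] {a : ℕ → ℤ} {s : ℕ}
    (h : ∑ k ∈ Finset.range (s + 1), C (a k : R) * X ^ k = 0) :
    ∀ k ∈ Finset.range (s + 1), a k = 0 := by
  intro k hk
  simpa [finsetSum_coeff, coeff_C_mul_X_pow, hk] using congrArg (coeff · k) h

end SymbolicSupport

theorem dtrdeg_eq_card {K : Type*} [Field K] [Algebra ℚ K] (σ : K →+* K) {m : ℕ}
    {a : Fin m → K} (S : Finset (Fin m)) (hS : TransformallyIndependent σ fun i : S => a i)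
    (halg : ∀ i ∉ S, IsAlgebraic ℚ (a i)) : dtrdeg σ a = S.card := by
  refine IsGreatest.csSup_eq ⟨⟨S, rfl, hS⟩, ?_⟩
  rintro k ⟨T, rfl, hT⟩
  refine Finset.card_le_card fun i hi => ?_
  by_contra hiS
  exact hT.transcendental (⟨i, hi⟩, 0) (by simpa using halg i hiS)

theorem stmt_1_general {K : Type*} [Field K] [Algebra ℚ K] (σ : K →+* K)
    (n m s r : ℕ) (y : Fin n → K)
    (hy : TransformallyIndependent σ y)
    (d : Fin m → Fin n → ℕ → ℤ)
    (B : Fin m → K)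
    (hB : ∀ i, B i = ∏ j : Fin n, ∏ k ∈ Finset.range (s + 1), ((σ ^ k) (y j)) ^ (d i j k))
    (M : Matrix (Fin m) (Fin n) (Polynomial ℚ))
    (hM : ∀ i j, M i j = ∑ k ∈ Finset.range (s + 1),
      Polynomial.C ((d i j k : ℚ)) * Polynomial.X ^ k)
    (hrm : r ≤ m) (hrn : r ≤ n)
    (hdiag : ∀ (i : Fin m) (j : Fin n), (i : ℕ) < r → (i : ℕ) = (j : ℕ) → M i j ≠ 0)
    (hlow : ∀ (i : Fin m) (j : Fin n), (i : ℕ) < r → (j : ℕ) < (i : ℕ) → M i j = 0)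
    (hzero : ∀ (i : Fin m) (j : Fin n), r ≤ (i : ℕ) → M i j = 0) :
    dtrdeg σ B = r := by
  classical
  let S : Finset (Fin m) := {i | (i : ℕ) < r}
  have hS : ∀ i, i ∈ S ↔ (i : ℕ) < r := by simp [S]
  have hrows : LinearIndependent (Polynomial ℚ) fun i : S => M i :=
    linearIndependent_of_pivot _ (fun i => ⟨i, ((hS i).1 i.2).trans_le hrn⟩)
      (fun i => hdiag _ _ ((hS i).1 i.2) rfl) (fun _ i' h => hlow _ _ ((hS i').1 i'.2) h)
  have hexponents : LinearIndependent ℤ fun p : ℕ × S => shiftedExponent (d p.2) s p.1 := by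
    refine LinearIndependent.of_comp (symbolicSupport ℚ) ?_
    convert (linearIndependent_smul (Polynomial.basisMonomials ℚ).linearIndependent
      hrows).restrict_scalars' ℤ with p
    ext1 j
    simp [symbolicSupport_shiftedExponent, hM, Polynomial.X_pow_eq_monomial]
  have hy' : AlgebraicIndependent ℚ fun q : Fin n × ℕ => (σ ^ q.2) (y q.1) := hy
  have hindep := (hy'.algebraicIndependent_laurentMonomial hexponents).comp Prod.swap
    Prod.swap_injective
  have hcard : S.card = r := by simp [S, Fin.card_filter_val_lt, hrm]
  rw [← hcard]
  refine dtrdeg_eq_card σ S ?_ fun i hi => ?_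
  · unfold TransformallyIndependent
    convert hindep using 2 with p
    exact (congrArg _ (hB p.1)).trans (pow_apply_prod_eq_laurentMonomial σ y hy'.ne_zero _ _ _)
  · have hd : ∀ j, ∀ k ∈ Finset.range (s + 1), d i j k = 0 := fun j =>
      eq_zero_of_sum_C_mul_X_pow_eq_zero ℚ
        ((hM i j).symm.trans (hzero i j (by simpa [hS] using hi)))
    rw [hB, Finset.prod_eq_one fun j _ =>
      Finset.prod_eq_one fun k hk => by rw [hd j k hk, zpow_zero]]
    exact isAlgebraic_one

/-- if the symbolic support matrix of the Laurent difference monomials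
`B₁,…,B_m` is normal upper-triangular of rank `r`, then
`dtrdeg ℚ⟨B₁,…,B_m⟩/ℚ = r`. -/
theorem stmt_1 {K : Type*} [Field K] [Algebra ℚ K] (σ : K →+* K)
    (hσ : Function.Injective σ)
    (n m s r : ℕ) (y : Fin n → K)
    (hy : TransformallyIndependent σ y)
    (d : Fin m → Fin n → ℕ → ℤ)
    (B : Fin m → K)
    (hB : ∀ i, B i = ∏ j : Fin n, ∏ k ∈ Finset.range (s + 1), ((σ ^ k) (y j)) ^ (d i j k))
    (M : Matrix (Fin m) (Fin n) (Polynomial ℚ))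
    (hM : ∀ i j, M i j = ∑ k ∈ Finset.range (s + 1),
      Polynomial.C ((d i j k : ℚ)) * Polynomial.X ^ k)
    (hrm : r ≤ m) (hrn : r ≤ n)
    (hdiag : ∀ (i : Fin m) (j : Fin n), (i : ℕ) < r → (i : ℕ) = (j : ℕ) → M i j ≠ 0)
    (hlow : ∀ (i : Fin m) (j : Fin n), (i : ℕ) < r → (j : ℕ) < (i : ℕ) → M i j = 0)
    (hzero : ∀ (i : Fin m) (j : Fin n), r ≤ (i : ℕ) → M i j = 0) :
    dtrdeg σ B = r :=
  stmt_1_general σ n m s r y hy d B hB M hM hrm hrn hdiag hlow hzero
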